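/- Suppose z = (1/2)(e^{iθ₀}, e^{iθ₁}, e^{iθ₂}, e^{iθ₃}) with P_j = |z_j|² = 1/4 for all j and Q_j = |Σ_k A_{jk}z_k|² = 1/4 for all j, where A = (1/2)[[1,1,1,1],[1,1,−1,−1],[1,−1,1,−1],[1,−1,−1,1]]. Then at least two of the numbers R_j = |Σ_k B_{jk}z_k|² (with B = (1/2)[[1,1,1,−1],[1,1,−1,1],[1,−1,1,1],[1,−1,−1,−1]]) vanish; consequently the Shannon entropy H({R_j}) ≤ 1, with H({R_j}) = 1 iff up to global phase and allowed symmetries z = (1/2)(1, −1, ±i, ±i). -/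

import Mathlib

/-!
Since `|z_j|² = 1/4`, the conditions `Q_j = 1/4` amount to
`Re(z₀z̄₁ + z₂z̄₃) = Re(z₀z̄₂ + z₁z̄₃) = Re(z₀z̄₃ + z₁z̄₂) = 0`. Substituting
`z̄_j = 1/(4 z_j)` turns these into `YZ = XZ = XY = 0` for the pairings
`X = z₀z₁ + z₂z₃`, `Y = z₀z₂ + z₁z₃`, `Z = z₀z₃ + z₁z₂`, so two of them vanish, and this
forces `z` to be a permutation of `(u, -u, v, v)`.

Up to signs and the order of its rows, `B z` is the reflection `(∑ z)/2 - z`, so `R` is a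
permutation of `(|v - u|², |v + u|², 0, 0)` and `H` is the binary entropy of
`|v - u|² = 1/2 - 2 Re(v ū)`, measured in bits. It equals `1` exactly when `v = ± i u`; and a
vector of the form `(u, -u, v, v)` is a cluster vector exactly when `u² + v² = 0`, because
`∑ z_j²` is invariant under permutations and vanishes on `(1, -1, ±i, ±i)`.
-/

open Complex

noncomputable section

/-- The orthogonal matrix A. -/
def Amat : Matrix (Fin 4) (Fin 4) ℂ :=
  (1/2 : ℂ) • !![1,1,1,1; 1,1,-1,-1; 1,-1,1,-1; 1,-1,-1,1]

/-- The orthogonal matrix B. -/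
def Bmat : Matrix (Fin 4) (Fin 4) ℂ :=
  (1/2 : ℂ) • !![1,1,1,-1; 1,1,-1,1; 1,-1,1,1; 1,-1,-1,-1]

open ComplexConjugate

theorem neg_mul_logb_add_mul_logb_eq_binEntropy_div {p q : ℝ} (h : p + q = 1) :
    -(p * Real.logb 2 p + q * Real.logb 2 q) = Real.binEntropy p / Real.log 2 := by
  obtain rfl : q = 1 - p := by linarith
  rw [Real.binEntropy_eq_negMulLog_add_negMulLog_one_sub, Real.negMulLog, Real.negMulLog,
    Real.logb, Real.logb]
  ring

theorem neg_mul_logb_add_mul_logb_le_one {p q : ℝ} (h : p + q = 1) :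
    -(p * Real.logb 2 p + q * Real.logb 2 q) ≤ 1 := by
  rw [neg_mul_logb_add_mul_logb_eq_binEntropy_div h, div_le_one (Real.log_pos one_lt_two)]
  exact Real.binEntropy_le_log_two

theorem neg_mul_logb_add_mul_logb_eq_one_iff {p q : ℝ} (h : p + q = 1) :
    -(p * Real.logb 2 p + q * Real.logb 2 q) = 1 ↔ p = 2⁻¹ := by
  rw [neg_mul_logb_add_mul_logb_eq_binEntropy_div h,
    div_eq_one_iff_eq (Real.log_pos one_lt_two).ne', Real.binEntropy_eq_log_two]

theorem sq_norm_sub_eq_half_iff {u v : ℂ} (hu : ‖u‖ = 1 / 2) (hv : ‖v‖ = 1 / 2) :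
    ‖v - u‖ ^ 2 = 2⁻¹ ↔ (v * conj u).re = 0 := by
  rw [Complex.sq_norm, normSq_sub, ← Complex.sq_norm, ← Complex.sq_norm, hu, hv]
  constructor <;> intro h <;> linarith

theorem re_mul_conj_eq_zero_iff {u v : ℂ} (hu : u ≠ 0) (huv : ‖v‖ = ‖u‖) :
    (v * conj u).re = 0 ↔ v = I * u ∨ v = -(I * u) := by
  constructor
  · intro h
    obtain ⟨s, rfl⟩ : ∃ s, v = s * u := ⟨v / u, (div_mul_cancel₀ v hu).symm⟩
    have hs : ‖s‖ = 1 := by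
      rw [norm_mul] at huv
      exact (mul_eq_right₀ (norm_ne_zero_iff.mpr hu)).mp huv
    have hre : s.re = 0 := by
      rw [mul_assoc, mul_conj, re_mul_ofReal] at h
      exact (mul_eq_zero.mp h).resolve_right (normSq_pos.mpr hu).ne'
    have him : s.im ^ 2 = 1 := by
      have := normSq_eq_norm_sq s
      rw [hs, normSq_apply, hre] at this
      linarith
    have hsI : s = I ∨ s = -I := by
      rcases sq_eq_one_iff.mp him with h | h
      · exact Or.inl (Complex.ext (by simp [hre]) (by simp [h]))
      · exact Or.inr (Complex.ext (by simp [hre]) (by simp [h]))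
    rcases hsI with rfl | rfl
    · exact Or.inl rfl
    · exact Or.inr (neg_mul I u)
  · rintro (rfl | rfl) <;> simp [mul_assoc, mul_conj]

theorem mul_add_mul_mul_eq_zero_of_mul_conj {a b c d : ℂ} (hb : ‖b‖ = ‖a‖) (hc : ‖c‖ = ‖a‖)
    (hd : ‖d‖ = ‖a‖) (h : a * conj b + b * conj a + c * conj d + d * conj c = 0) :
    (a * c + b * d) * (a * d + b * c) = 0 := by
  rcases eq_or_ne a 0 with rfl | ha
  · simp_all
  have hr : (‖a‖ : ℂ) ^ 2 ≠ 0 := by simpa using ha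
  have ha' := mul_conj' a
  have hb' : b * conj b = (‖a‖ : ℂ) ^ 2 := by rw [mul_conj', hb]
  have hc' : c * conj c = (‖a‖ : ℂ) ^ 2 := by rw [mul_conj', hc]
  have hd' : d * conj d = (‖a‖ : ℂ) ^ 2 := by rw [mul_conj', hd]
  refine (mul_eq_zero.mp ?_).resolve_left hr
  linear_combination a * b * c * d * h - a ^ 2 * c * d * hb' - b ^ 2 * c * d * ha'
    - c ^ 2 * a * b * hd' - d ^ 2 * a * b * hc'

theorem antipodal_equal_of_pairings {K : Type*} [Field K] [NeZero (2 : K)] {a b c d : K}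
    (ha : a ≠ 0) (hb : b ≠ 0) (h₁ : a * b + c * d = 0) (h₂ : a * c + b * d = 0) :
    (d = a ∧ c = -b) ∨ (c = b ∧ d = -a) := by
  have hdiff : (a - d) * (b - c) = 0 := by linear_combination h₁ - h₂
  have hsum : (a + d) * (b + c) = 0 := by linear_combination h₁ + h₂
  rcases mul_eq_zero.mp hdiff with h | h <;> rcases mul_eq_zero.mp hsum with h' | h'
  · exact absurd ((mul_eq_zero.mp (by linear_combination h + h' : 2 * a = 0)).resolve_left
      two_ne_zero) ha
  · exact Or.inl ⟨by linear_combination -h, by linear_combination h'⟩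
  · exact Or.inr ⟨by linear_combination -h, by linear_combination h'⟩
  · exact absurd ((mul_eq_zero.mp (by linear_combination h + h' : 2 * b = 0)).resolve_left
      two_ne_zero) hb

theorem exists_perm_antipodal_equal {z : Fin 4 → ℂ} (hz : ∀ j, z j ≠ 0)
    (hYZ : (z 0 * z 2 + z 1 * z 3) * (z 0 * z 3 + z 1 * z 2) = 0)
    (hXZ : (z 0 * z 1 + z 2 * z 3) * (z 0 * z 3 + z 1 * z 2) = 0)
    (hXY : (z 0 * z 1 + z 2 * z 3) * (z 0 * z 2 + z 1 * z 3) = 0) :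
    ∃ σ : Equiv.Perm (Fin 4), z (σ 1) = -z (σ 0) ∧ z (σ 3) = z (σ 2) := by
  have two_pairings_vanish : (z 0 * z 1 + z 2 * z 3 = 0 ∧ z 0 * z 2 + z 1 * z 3 = 0) ∨
      (z 0 * z 1 + z 2 * z 3 = 0 ∧ z 0 * z 3 + z 1 * z 2 = 0) ∨
      (z 0 * z 2 + z 1 * z 3 = 0 ∧ z 0 * z 3 + z 1 * z 2 = 0) := by
    rcases mul_eq_zero.mp hXY with hX | hY
    · rcases mul_eq_zero.mp hYZ with hY | hZ
      · exact Or.inl ⟨hX, hY⟩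
      · exact Or.inr (Or.inl ⟨hX, hZ⟩)
    · rcases mul_eq_zero.mp hXZ with hX | hZ
      · exact Or.inl ⟨hX, hY⟩
      · exact Or.inr (Or.inr ⟨hY, hZ⟩)
  rcases two_pairings_vanish with ⟨hX, hY⟩ | ⟨hX, hZ⟩ | ⟨hY, hZ⟩
  · rcases antipodal_equal_of_pairings (hz 0) (hz 1) hX hY with ⟨h3, h2⟩ | ⟨h2, h3⟩
    · exact ⟨⟨![1, 2, 0, 3], ![2, 0, 1, 3], by decide, by decide⟩, h2, h3⟩
    · exact ⟨⟨![0, 3, 1, 2], ![0, 2, 3, 1], by decide, by decide⟩, h3, h2⟩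
  · rcases antipodal_equal_of_pairings (hz 0) (hz 1) (c := z 3) (d := z 2)
      (by linear_combination hX) (by linear_combination hZ) with ⟨h2, h3⟩ | ⟨h3, h2⟩
    · exact ⟨⟨![1, 3, 0, 2], ![2, 0, 3, 1], by decide, by decide⟩, h3, h2⟩
    · exact ⟨⟨![0, 2, 1, 3], ![0, 2, 1, 3], by decide, by decide⟩, h2, h3⟩
  · rcases antipodal_equal_of_pairings (hz 0) (hz 2) (c := z 3) (d := z 1)
      (by linear_combination hY) (by linear_combination hZ) with ⟨h1, h3⟩ | ⟨h3, h1⟩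
    · exact ⟨⟨![2, 3, 0, 1], ![2, 3, 0, 1], by decide, by decide⟩, h3, h1⟩
    · exact ⟨1, h1, h3⟩

theorem sum_Amat_mul_eq (z : Fin 4 → ℂ) :
    ∑ k, Amat 0 k * z k = (z 0 + z 1 + z 2 + z 3) / 2 ∧
    ∑ k, Amat 1 k * z k = (z 0 + z 1 - z 2 - z 3) / 2 ∧
    ∑ k, Amat 2 k * z k = (z 0 - z 1 + z 2 - z 3) / 2 ∧
    ∑ k, Amat 3 k * z k = (z 0 - z 1 - z 2 + z 3) / 2 := by
  refine ⟨?_, ?_, ?_, ?_⟩ <;> simp [Amat, Fin.sum_univ_four] <;> ring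

theorem norm_sum_Bmat_mul (z : Fin 4 → ℂ) (j : Fin 4) :
    ‖∑ k, Bmat j k * z k‖ = ‖(∑ k, z k) / 2 - z (Fin.rev j)‖ := by
  fin_cases j
  · congr 1; simp [Bmat, Fin.sum_univ_four]; ring
  · congr 1; simp [Bmat, Fin.sum_univ_four]; ring
  · congr 1; simp [Bmat, Fin.sum_univ_four]; ring
  · rw [← norm_neg]; congr 1; simp [Bmat, Fin.sum_univ_four]; ring

theorem pairing_mul_conj_sums_eq_zero {z : Fin 4 → ℂ} (hP : ∀ j, ‖z j‖ = 1 / 2)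
    (hQ : ∀ j, ‖∑ k, Amat j k * z k‖ ^ 2 = 1 / 4) :
    z 0 * conj (z 1) + z 1 * conj (z 0) + z 2 * conj (z 3) + z 3 * conj (z 2) = 0 ∧
    z 0 * conj (z 2) + z 2 * conj (z 0) + z 1 * conj (z 3) + z 3 * conj (z 1) = 0 ∧
    z 0 * conj (z 3) + z 3 * conj (z 0) + z 1 * conj (z 2) + z 2 * conj (z 1) = 0 := by
  have hS : ∀ j, (∑ k, Amat j k * z k) * conj (∑ k, Amat j k * z k) = 1 / 4 := fun j => by
    rw [mul_conj', ← ofReal_pow, hQ j]; norm_num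
  have hz : ∀ j, z j * conj (z j) = 1 / 4 := fun j => by
    rw [mul_conj', hP j]; norm_num
  obtain ⟨r0, r1, r2, r3⟩ := sum_Amat_mul_eq z
  have h0 := hS 0
  have h1 := hS 1
  have h2 := hS 2
  have h3 := hS 3
  rw [r0] at h0
  rw [r1] at h1
  rw [r2] at h2
  rw [r3] at h3
  simp only [map_add, map_sub, map_div₀, map_ofNat] at h0 h1 h2 h3
  refine ⟨?_, ?_, ?_⟩
  · linear_combination 2 * h0 + 2 * h1 - hz 0 - hz 1 - hz 2 - hz 3
  · linear_combination 2 * h0 + 2 * h2 - hz 0 - hz 1 - hz 2 - hz 3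
  · linear_combination 2 * h0 + 2 * h3 - hz 0 - hz 1 - hz 2 - hz 3

theorem exists_perm_antipodal_equal_of_norm_eq_half {z : Fin 4 → ℂ}
    (hP : ∀ j, ‖z j‖ = 1 / 2) (hQ : ∀ j, ‖∑ k, Amat j k * z k‖ ^ 2 = 1 / 4) :
    ∃ σ : Equiv.Perm (Fin 4), z (σ 1) = -z (σ 0) ∧ z (σ 3) = z (σ 2) := by
  have hz : ∀ j, z j ≠ 0 := fun j => norm_ne_zero_iff.mp (by simp [hP])
  have hnorm : ∀ j, ‖z j‖ = ‖z 0‖ := fun j => by rw [hP, hP]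
  obtain ⟨h01, h02, h03⟩ := pairing_mul_conj_sums_eq_zero hP hQ
  refine exists_perm_antipodal_equal hz
    (mul_add_mul_mul_eq_zero_of_mul_conj (hnorm 1) (hnorm 2) (hnorm 3) h01) ?_ ?_
  · linear_combination mul_add_mul_mul_eq_zero_of_mul_conj (hnorm 2) (hnorm 1) (hnorm 3)
      (by linear_combination h02)
  · linear_combination mul_add_mul_mul_eq_zero_of_mul_conj (hnorm 3) (hnorm 1) (hnorm 2)
      (by linear_combination h03)

def IsClusterState (z : Fin 4 → ℂ) : Prop :=
  ∃ (c : ℂ) (s : ℂ) (σ : Equiv.Perm (Fin 4)), ‖c‖ = 1 ∧ (s = I ∨ s = -I) ∧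
    ∀ j, z (σ j) = c * (1/2 : ℂ) * ![1, -1, s, s] j

theorem IsClusterState.comp_perm {z : Fin 4 → ℂ} (h : IsClusterState z)
    (τ : Equiv.Perm (Fin 4)) : IsClusterState (z ∘ τ) := by
  obtain ⟨c, s, σ, hc, hs, hz⟩ := h
  exact ⟨c, s, τ⁻¹ * σ, hc, hs, fun j => by simp [hz]⟩

theorem isClusterState_comp_perm_iff {z : Fin 4 → ℂ} (τ : Equiv.Perm (Fin 4)) :
    IsClusterState (z ∘ τ) ↔ IsClusterState z :=
  ⟨fun h => by simpa [Function.comp_def] using h.comp_perm τ⁻¹, fun h => h.comp_perm τ⟩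

theorem IsClusterState.sum_sq_eq_zero {z : Fin 4 → ℂ} (h : IsClusterState z) :
    ∑ j, z j ^ 2 = 0 := by
  obtain ⟨c, s, σ, -, hs, hz⟩ := h
  have hs2 : s ^ 2 = -1 := by rcases hs with rfl | rfl <;> simp
  rw [← Equiv.sum_comp σ, Fin.sum_univ_four]
  simp only [hz, Matrix.cons_val_zero, Matrix.cons_val_one, Matrix.cons_val, mul_one, mul_neg,
    even_two, Even.neg_pow]
  linear_combination c ^ 2 / 2 * hs2

theorem isClusterState_iff_of_antipodal_equal {w : Fin 4 → ℂ} (h1 : w 1 = -w 0)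
    (h3 : w 3 = w 2) (hw : ‖w 0‖ = 1 / 2) :
    IsClusterState w ↔ w 2 = I * w 0 ∨ w 2 = -(I * w 0) := by
  constructor
  · intro h
    have hsq := h.sum_sq_eq_zero
    rw [Fin.sum_univ_four, h1, h3] at hsq
    have hfactor : (w 2 - I * w 0) * (w 2 + I * w 0) = 0 := by
      linear_combination hsq / 2 - w 0 ^ 2 * I_sq
    rcases mul_eq_zero.mp hfactor with h | h
    · exact Or.inl (by linear_combination h)
    · exact Or.inr (by linear_combination h)
  · have hc : ‖2 * w 0‖ = 1 := by simp [hw]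
    rintro (h | h)
    · refine ⟨2 * w 0, I, 1, hc, Or.inl rfl, fun j => ?_⟩
      fin_cases j <;> simp [h1, h3, h] <;> ring
    · refine ⟨2 * w 0, -I, 1, hc, Or.inr rfl, fun j => ?_⟩
      fin_cases j <;> simp [h1, h3, h] <;> ring

/-- If all |zⱼ| = 1/2 (so Pⱼ = 1/4) and all Qⱼ = 1/4, then at least two of the
    Rⱼ vanish, the Shannon entropy H({Rⱼ}) ≤ 1, and H({Rⱼ}) = 1 iff up to global
    phase and permutation z = (1/2)(1, −1, ±i, ±i). This characterizes the cluster
    state |C₂⟩. -/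
theorem cluster_state_characterization (z : Fin 4 → ℂ)
    (hP : ∀ j, ‖z j‖ = 1/2)
    (hQ : ∀ j, (‖∑ k, Amat j k * z k‖)^2 = 1/4) :
    let R : Fin 4 → ℝ := fun j => (‖∑ k, Bmat j k * z k‖)^2
    let H : ℝ := -∑ j, R j * Real.logb 2 (R j)
    (∃ j k : Fin 4, j ≠ k ∧ R j = 0 ∧ R k = 0) ∧
    H ≤ 1 ∧
    (H = 1 ↔ ∃ (c : ℂ) (s : ℂ) (σ : Equiv.Perm (Fin 4)),
      ‖c‖ = 1 ∧ (s = I ∨ s = -I) ∧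
      ∀ j, z (σ j) = c * (1/2 : ℂ) * ![1, -1, s, s] j) := by
  intro R H
  obtain ⟨σ, h1, h3⟩ := exists_perm_antipodal_equal_of_norm_eq_half hP hQ
  have hsum : (∑ k, z k) / 2 = z (σ 2) := by
    rw [← Equiv.sum_comp σ, Fin.sum_univ_four, h1, h3]; ring
  have hR : ∀ j, R (Fin.rev (σ j)) = ‖z (σ 2) - z (σ j)‖ ^ 2 := fun j => by
    simp only [R, norm_sum_Bmat_mul, Fin.rev_rev, hsum]
  have hH : H = -(‖z (σ 2) - z (σ 0)‖ ^ 2 * Real.logb 2 (‖z (σ 2) - z (σ 0)‖ ^ 2)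
      + ‖z (σ 2) + z (σ 0)‖ ^ 2 * Real.logb 2 (‖z (σ 2) + z (σ 0)‖ ^ 2)) := by
    simp only [H, ← Equiv.sum_comp (σ.trans Fin.revPerm) (fun j => R j * Real.logb 2 (R j)),
      Equiv.trans_apply, Fin.revPerm_apply, hR, Fin.sum_univ_four, h1, h3]
    simp
  have hpq : ‖z (σ 2) - z (σ 0)‖ ^ 2 + ‖z (σ 2) + z (σ 0)‖ ^ 2 = 1 := by
    have := parallelogram_law_with_norm ℝ (z (σ 2)) (z (σ 0))
    rw [hP, hP] at this
    linarith
  refine ⟨⟨_, _, (Fin.rev_injective.comp σ.injective).ne (by decide : (2 : Fin 4) ≠ 3),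
    by simp [hR], by simp [hR, h3]⟩, hH ▸ neg_mul_logb_add_mul_logb_le_one hpq, ?_⟩
  rw [hH, neg_mul_logb_add_mul_logb_eq_one_iff hpq, sq_norm_sub_eq_half_iff (hP _) (hP _),
    re_mul_conj_eq_zero_iff (norm_ne_zero_iff.mp (by simp [hP])) (by rw [hP, hP])]
  exact (isClusterState_iff_of_antipodal_equal (w := z ∘ σ) h1 h3 (hP _)).symm.trans
    (isClusterState_comp_perm_iff σ)
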